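/- Among all set functions α : 2^[n] → L that disjunctively define a given weighted lattice polynomial function p (i.e., p(x) = ⋁_{S}(α(S) ∧ ⋀_{i∈S} x_i)), exactly one is nondecreasing, namely α(S) = p(e_S). -/

import Mathlib

open Finset MeasureTheory ProbabilityTheory

/-- Weighted lattice polynomial functions on the interval L = [a,b] ⊆ ℝ:
built inductively from projections, constants in [a,b], pointwise min and max. -/
inductive IsWLP (a b : ℝ) (n : ℕ) : ((Fin n → ℝ) → ℝ) → Prop
  | proj (k : Fin n) : IsWLP a b n (fun x => x k)
  | const (c : ℝ) (hc : c ∈ Set.Icc a b) : IsWLP a b n (fun _ => c)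
  | inf {p q} : IsWLP a b n p → IsWLP a b n q → IsWLP a b n (fun x => min (p x) (q x))
  | sup {p q} : IsWLP a b n p → IsWLP a b n q → IsWLP a b n (fun x => max (p x) (q x))

/-- The characteristic vector e_S of S ⊆ [n] in {a,b}^n. -/
def charVec (a b : ℝ) {n : ℕ} (S : Finset (Fin n)) : Fin n → ℝ := fun i => if i ∈ S then b else a

/-! Every weighted lattice polynomial function `p` is nondecreasing. Hence, at `e_S`, the
disjunctive form of a nondecreasing `α` collapses to `α S`: the term of `T ⊆ S` is
`α T ≤ α S`, and every other term is at most `a`. This gives uniqueness. The representation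
by `S ↦ p (e_S)` follows by induction on `p`: the disjunctive form commutes with `max`
always, and with `min` as soon as both coefficient functions are nondecreasing, since the
terms of `S` and `T` are then dominated by the term of `S ∪ T`. -/

section DisjunctiveForm

variable {ι L : Type*} [LinearOrder L] {b c : L} {x : ι → L}

theorem fold_min_union [DecidableEq ι] (S T : Finset ι) :
    (S ∪ T).fold min b x = min (S.fold min b x) (T.fold min b x) :=
  eq_of_forall_le_iff fun c => by
    simp only [le_fold_min, le_min_iff, mem_union]
    grind

variable [Fintype ι] {α β : Finset ι → L}

/-- `⋁_S (α S ∧ ⋀_{i ∈ S} x i)`, the empty meet being the top element `b` of the interval. -/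
def disjForm (b : L) (α : Finset ι → L) (x : ι → L) : L :=
  (univ : Finset ι).powerset.sup' (powerset_nonempty _) fun S => min (α S) (S.fold min b x)

theorem le_disjForm (S : Finset ι) : min (α S) (S.fold min b x) ≤ disjForm b α x :=
  le_sup' (fun S => min (α S) (S.fold min b x)) (mem_powerset.2 (subset_univ S))

theorem disjForm_le_iff : disjForm b α x ≤ c ↔ ∀ S, min (α S) (S.fold min b x) ≤ c := by
  simp [disjForm, sup'_le_iff]

theorem disjForm_mono (h : α ≤ β) : disjForm b α x ≤ disjForm b β x :=
  disjForm_le_iff.2 fun S => (min_le_min_right _ (h S)).trans (le_disjForm S)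

theorem disjForm_const (hc : c ≤ b) : disjForm b (fun _ => c) x = c :=
  le_antisymm (disjForm_le_iff.2 fun _ => min_le_left _ _) <|
    calc c = min c ((∅ : Finset ι).fold min b x) := by rw [fold_empty, min_eq_left hc]
      _ ≤ _ := le_disjForm (α := fun _ => c) ∅

theorem disjForm_max :
    disjForm b (fun S => max (α S) (β S)) x = max (disjForm b α x) (disjForm b β x) :=
  le_antisymm
    (disjForm_le_iff.2 fun S => by
      rw [min_max_distrib_right]
      exact max_le_max (le_disjForm S) (le_disjForm S))
    (max_le (disjForm_mono fun _ => le_max_left _ _) (disjForm_mono fun _ => le_max_right _ _))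

theorem disjForm_min [DecidableEq ι] (hα : Monotone α) (hβ : Monotone β) :
    disjForm b (fun S => min (α S) (β S)) x = min (disjForm b α x) (disjForm b β x) := by
  refine le_antisymm (le_min (disjForm_mono fun _ => min_le_left _ _)
    (disjForm_mono fun _ => min_le_right _ _)) ?_
  obtain ⟨S, -, hS⟩ := exists_mem_eq_sup' (powerset_nonempty (univ : Finset ι))
    fun S => min (α S) (S.fold min b x)
  obtain ⟨T, -, hT⟩ := exists_mem_eq_sup' (powerset_nonempty (univ : Finset ι))
    fun S => min (β S) (S.fold min b x)
  calc min (disjForm b α x) (disjForm b β x)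
      = min (min (α S) (β T)) (min (S.fold min b x) (T.fold min b x)) := by
        rw [disjForm, disjForm, hS, hT, min_min_min_comm]
    _ ≤ min (min (α (S ∪ T)) (β (S ∪ T))) ((S ∪ T).fold min b x) := by
        rw [fold_min_union]
        gcongr
        exacts [hα subset_union_left, hβ subset_union_right]
    _ ≤ _ := le_disjForm (α := fun S => min (α S) (β S)) (S ∪ T)

end DisjunctiveForm

section CharVec

variable {a b : ℝ} {n : ℕ}

theorem charVec_mem_Icc (hab : a ≤ b) (S : Finset (Fin n)) (i : Fin n) :
    charVec a b S i ∈ Set.Icc a b := by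
  unfold charVec
  split_ifs
  exacts [Set.right_mem_Icc.2 hab, Set.left_mem_Icc.2 hab]

theorem charVec_mono (hab : a ≤ b) : Monotone (charVec a b : Finset (Fin n) → Fin n → ℝ) := by
  intro S T hST i
  unfold charVec
  split_ifs with hS hT hT
  exacts [le_rfl, absurd (hST hS) hT, hab, le_rfl]

theorem disjForm_charVec_apply {x : Fin n → ℝ} (k : Fin n) (hx : x k ∈ Set.Icc a b) :
    disjForm b (fun S => charVec a b S k) x = x k := by
  refine le_antisymm (disjForm_le_iff.2 fun S => ?_) ?_
  · by_cases hk : k ∈ S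
    · exact (min_le_right _ _).trans ((fold_min_le _).2 (Or.inr ⟨k, hk, le_rfl⟩))
    · exact (min_le_left _ _).trans (by simpa [charVec, hk] using hx.1)
  · calc x k = min (charVec a b {k} k) (({k} : Finset (Fin n)).fold min b x) := by
          simp [charVec, hx.2]
      _ ≤ _ := le_disjForm (α := fun S => charVec a b S k) {k}

theorem disjForm_charVec {α : Finset (Fin n) → ℝ} (hα : Monotone α) {T : Finset (Fin n)}
    (haT : a ≤ α T) (hTb : α T ≤ b) : disjForm b α (charVec a b T) = α T := by
  refine le_antisymm (disjForm_le_iff.2 fun S => ?_) ?_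
  · by_cases hST : S ⊆ T
    · exact (min_le_left _ _).trans (hα hST)
    · obtain ⟨i, hiS, hiT⟩ := not_subset.1 hST
      exact (min_le_right _ _).trans
        ((fold_min_le _).2 (Or.inr ⟨i, hiS, by simpa [charVec, hiT] using haT⟩))
  · refine (le_min le_rfl ((le_fold_min _).2 ⟨hTb, fun i hi => ?_⟩)).trans (le_disjForm T)
    simpa [charVec, hi] using hTb

end CharVec

namespace IsWLP

variable {a b : ℝ} {n : ℕ} {p : (Fin n → ℝ) → ℝ}

theorem monotone (hp : IsWLP a b n p) : Monotone p := by
  induction hp with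
  | proj k => exact fun _ _ h => h k
  | const c _ => exact monotone_const
  | inf _ _ hq hr => exact hq.min hr
  | sup _ _ hq hr => exact hq.max hr

theorem mem_Icc (hp : IsWLP a b n p) {x : Fin n → ℝ} (hx : ∀ i, x i ∈ Set.Icc a b) :
    p x ∈ Set.Icc a b := by
  induction hp with
  | proj k => exact hx k
  | const c hc => exact hc
  | inf _ _ hq hr => exact min_rec' _ hq hr
  | sup _ _ hq hr => exact max_rec' _ hq hr

theorem eq_disjForm (hab : a ≤ b) (hp : IsWLP a b n p) {x : Fin n → ℝ}
    (hx : ∀ i, x i ∈ Set.Icc a b) : p x = disjForm b (fun S => p (charVec a b S)) x := by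
  induction hp with
  | proj k => exact (disjForm_charVec_apply k (hx k)).symm
  | const c hc => exact (disjForm_const hc.2).symm
  | inf hq hr ihq ihr =>
    exact (congrArg₂ min ihq ihr).trans
      (disjForm_min (hq.monotone.comp (charVec_mono hab)) (hr.monotone.comp (charVec_mono hab))).symm
  | sup _ _ ihq ihr => exact (congrArg₂ max ihq ihr).trans disjForm_max.symm

end IsWLP

/-- From among all set functions disjunctively defining p, exactly one is nondecreasing,
namely S ↦ p(e_S). -/
theorem wlp_unique_nondecreasing_disjunctive (a b : ℝ) (hab : a ≤ b) (n : ℕ)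
    (p : (Fin n → ℝ) → ℝ) (hp : IsWLP a b n p) :
    (∀ S, p (charVec a b S) ∈ Set.Icc a b) ∧
    (∀ S T : Finset (Fin n), S ⊆ T → p (charVec a b S) ≤ p (charVec a b T)) ∧
    (∀ x : Fin n → ℝ, (∀ i, x i ∈ Set.Icc a b) →
      p x = (Finset.univ (α := Fin n)).powerset.sup' (Finset.powerset_nonempty _)
        (fun S => min (p (charVec a b S)) (S.fold min b x))) ∧
    (∀ α : Finset (Fin n) → ℝ, (∀ S, α S ∈ Set.Icc a b) →
      (∀ S T : Finset (Fin n), S ⊆ T → α S ≤ α T) →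
      (∀ x : Fin n → ℝ, (∀ i, x i ∈ Set.Icc a b) →
        p x = (Finset.univ (α := Fin n)).powerset.sup' (Finset.powerset_nonempty _)
          (fun S => min (α S) (S.fold min b x))) →
      ∀ S, α S = p (charVec a b S)) := by
  refine ⟨fun S => hp.mem_Icc (charVec_mem_Icc hab S),
    fun S T hST => hp.monotone (charVec_mono hab hST),
    fun x hx => hp.eq_disjForm hab hx, ?_⟩
  intro α hα hmono hrep S
  calc α S = disjForm b α (charVec a b S) :=
        (disjForm_charVec (fun _ _ => hmono _ _) (hα S).1 (hα S).2).symm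
    _ = p (charVec a b S) := (hrep _ (charVec_mem_Icc hab S)).symm
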